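/- Let $E_2^{i,j} \Rightarrow E^{i+j}$ and $H_2^{i,j} \Rightarrow H^{i+j}$ be two convergent (biregular, first-quadrant-type bounded) spectral sequences in an abelian category with a morphism of spectral sequences $\phi: E \to H$ with components $\phi_2^{i,j}: E_2^{i,j} \to H_2^{i,j}$ and limit maps $\phi^n: E^n \to H^n$. Fix integers $l$ and $a$. Suppose that $E_2^{i,l-i} = 0$ for all $i < a$, that $H_2^{i,l-i} = 0$ for all $i > a$, and that $\phi_2^{a,l-a} = 0$. Then $\phi^l = 0$. -/

import Mathlib

universe u

/-- A biregular (convergent, bounded) spectral sequence of abelian groups, following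
EGA III 0.11. Here `page r p q` denotes the term `E_{r+2}^{p,q}` (so `page 0` is the
second page `E₂`), `d` are the differentials, `α` the isomorphisms identifying the next
page with the homology of the previous one, `rstab p q` is a page at which the term
`(p,q)` has stabilized (all further differentials in and out of it vanish), `ab n` are
the abutments `Eⁿ` with their bounded decreasing filtrations `fil`, and `β` identifies
the stable terms `E_∞^{p,q}` with the graded pieces of the filtration. -/
structure BiregularSpectralSequence : Type (u + 1) where
  page : ℕ → ℤ → ℤ → AddCommGrpCat.{u}
  d : ∀ (r : ℕ) (p q : ℤ), ↥(page r p q) →+ ↥(page r (p + (r + 2)) (q - (r + 2) + 1))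
  d_comp_d : ∀ r p q, (d r (p + (r + 2)) (q - (r + 2) + 1)).comp (d r p q) = 0
  α : ∀ (r : ℕ) (p q : ℤ),
    ↥(page (r + 1) (p + (r + 2)) (q - (r + 2) + 1)) ≃+
      ((d r (p + (r + 2)) (q - (r + 2) + 1)).ker ⧸
        ((d r p q).range.addSubgroupOf (d r (p + (r + 2)) (q - (r + 2) + 1)).ker))
  rstab : ℤ → ℤ → ℕ
  d_out_zero : ∀ (p q : ℤ) (r : ℕ), rstab p q ≤ r → d r p q = 0
  d_in_zero : ∀ (p q : ℤ) (r : ℕ), rstab (p + (r + 2)) (q - (r + 2) + 1) ≤ r → d r p q = 0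
  ab : ℤ → AddCommGrpCat.{u}
  fil : (n : ℤ) → ℤ → AddSubgroup (ab n)
  fil_antitone : ∀ n, Antitone (fil n)
  fil_top : ∀ n, ∃ p, fil n p = ⊤
  fil_bot : ∀ n, ∃ p, fil n p = ⊥
  β : ∀ (p q : ℤ) (r : ℕ), rstab p q ≤ r →
    ↥(page r p q) ≃+
      (fil (p + q) p ⧸ ((fil (p + q) (p + 1)).addSubgroupOf (fil (p + q) p)))

namespace BiregularSpectralSequence

variable (E H : BiregularSpectralSequence.{u})

/-- The map induced on the graded pieces of the filtrations of the abutments by a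
filtration-preserving map. -/
def filGradedMap (fab : ∀ n, ↥(E.ab n) →+ ↥(H.ab n))
    (hfil : ∀ n p, (E.fil n p).map (fab n) ≤ H.fil n p) (n p : ℤ) :
    (E.fil n p ⧸ ((E.fil n (p + 1)).addSubgroupOf (E.fil n p))) →+
      (H.fil n p ⧸ ((H.fil n (p + 1)).addSubgroupOf (H.fil n p))) :=
  QuotientAddGroup.map _ _
    (AddMonoidHom.codRestrict ((fab n).comp (E.fil n p).subtype) (H.fil n p)
      (fun x => hfil n p (AddSubgroup.mem_map.mpr ⟨x.1, x.2, rfl⟩)))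
    (by
      intro x hx
      have hx' : (x : ↥(E.ab n)) ∈ E.fil n (p + 1) := hx
      show ((fab n).comp (E.fil n p).subtype) x ∈ H.fil n (p + 1)
      exact hfil n (p + 1) (AddSubgroup.mem_map.mpr ⟨x.1, hx', rfl⟩))

/-- The map induced on the homology of page `r` by a map of spectral sequences. -/
def pageHomologyMap (f : ∀ r p q, ↥(E.page r p q) →+ ↥(H.page r p q))
    (hcomm : ∀ r p q, (H.d r p q).comp (f r p q) =
      (f r (p + (r + 2)) (q - (r + 2) + 1)).comp (E.d r p q)) (r : ℕ) (p q : ℤ) :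
    ((E.d r (p + (r + 2)) (q - (r + 2) + 1)).ker ⧸
        ((E.d r p q).range.addSubgroupOf (E.d r (p + (r + 2)) (q - (r + 2) + 1)).ker)) →+
      ((H.d r (p + (r + 2)) (q - (r + 2) + 1)).ker ⧸
        ((H.d r p q).range.addSubgroupOf (H.d r (p + (r + 2)) (q - (r + 2) + 1)).ker)) :=
  QuotientAddGroup.map _ _
    (AddMonoidHom.codRestrict
      ((f r (p + (r + 2)) (q - (r + 2) + 1)).comp
        (E.d r (p + (r + 2)) (q - (r + 2) + 1)).ker.subtype)
      (H.d r (p + (r + 2)) (q - (r + 2) + 1)).ker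
      (fun x => by
        have hx : E.d r (p + (r + 2)) (q - (r + 2) + 1) x.1 = 0 := x.2
        have h := DFunLike.congr_fun (hcomm r (p + (r + 2)) (q - (r + 2) + 1)) x.1
        refine AddMonoidHom.mem_ker.mpr ?_
        simpa [AddMonoidHom.comp_apply, hx] using h))
    (by
      intro x hx
      have hx' : (x : ↥(E.page r (p + (r + 2)) (q - (r + 2) + 1))) ∈ (E.d r p q).range :=
        AddSubgroup.mem_addSubgroupOf.mp hx
      obtain ⟨y, hy⟩ := hx'
      show (f r (p + (r + 2)) (q - (r + 2) + 1)) x.1 ∈ (H.d r p q).range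
      refine ⟨f r p q y, ?_⟩
      have h := DFunLike.congr_fun (hcomm r p q) y
      simp only [AddMonoidHom.comp_apply] at h
      rw [h, hy])

end BiregularSpectralSequence

open BiregularSpectralSequence in
/-- A morphism of biregular spectral sequences: maps on every page commuting with the
differentials and compatible with the homology identifications `α`, together with maps
of the abutments preserving the filtrations and compatible with `β`. -/
structure SpectralSequenceHom (E H : BiregularSpectralSequence.{u}) : Type u where
  f : ∀ (r : ℕ) (p q : ℤ), ↥(E.page r p q) →+ ↥(H.page r p q)
  comm_d : ∀ r p q, (H.d r p q).comp (f r p q) =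
    (f r (p + (r + 2)) (q - (r + 2) + 1)).comp (E.d r p q)
  comm_α : ∀ (r : ℕ) (p q : ℤ) (x : ↥(E.page (r + 1) (p + (r + 2)) (q - (r + 2) + 1))),
    H.α r p q (f (r + 1) (p + (r + 2)) (q - (r + 2) + 1) x) =
      pageHomologyMap E H f comm_d r p q (E.α r p q x)
  fab : ∀ n : ℤ, ↥(E.ab n) →+ ↥(H.ab n)
  fil_le : ∀ n p, (E.fil n p).map (fab n) ≤ H.fil n p
  comm_β : ∀ (p q : ℤ) (r : ℕ) (hE : E.rstab p q ≤ r) (hH : H.rstab p q ≤ r)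
    (x : ↥(E.page r p q)),
    H.β p q r hH (f r p q x) = filGradedMap E H fab fil_le (p + q) p (E.β p q r hE x)
/-! The abutment `E^l` is concentrated in filtration degree `≥ a`, since the graded pieces of
`E^l` below `a` are subquotients of the vanishing terms `E₂^{i,l-i}`; likewise `H^l` has
nothing in filtration degree `> a`. So `φ^l` factors through the map of graded pieces in
degree `a`, which is induced by `φ_∞^{a,l-a}`, a subquotient map of `φ₂^{a,l-a} = 0`. -/

theorem Int.eq_of_forall_eq_add_one {α : Type*} (f : ℤ → α) {m n : ℤ} (hmn : m ≤ n)
    (h : ∀ p, m ≤ p → p < n → f p = f (p + 1)) : f m = f n := by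
  induction n, hmn using Int.leInduction with
  | base => rfl
  | succ n hmn ih =>
    rw [ih fun p hmp hpn => h p hmp (by omega), h n hmn (by omega)]

namespace BiregularSpectralSequence

variable (E : BiregularSpectralSequence.{u})

theorem subsingleton_page_succ {r : ℕ} {P Q : ℤ} [Subsingleton (E.page r P Q)] :
    Subsingleton (E.page (r + 1) P Q) := by
  obtain ⟨p, rfl⟩ : ∃ p : ℤ, P = p + (r + 2) := ⟨P - (r + 2), by ring⟩
  obtain ⟨q, rfl⟩ : ∃ q : ℤ, Q = q - (r + 2) + 1 := ⟨Q + (r + 2) - 1, by ring⟩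
  exact (E.α r p q).toEquiv.subsingleton_congr.mpr QuotientAddGroup.mk_surjective.subsingleton

theorem subsingleton_page {P Q : ℤ} [Subsingleton (E.page 0 P Q)] (r : ℕ) :
    Subsingleton (E.page r P Q) := by
  induction r with
  | zero => assumption
  | succ r ih => exact E.subsingleton_page_succ

theorem fil_eq_fil_succ_of_subsingleton {p q n : ℤ} (hn : p + q = n)
    [Subsingleton (E.page (E.rstab p q) p q)] : E.fil n p = E.fil n (p + 1) := by
  subst hn
  refine le_antisymm (fun x hx => ?_) (E.fil_antitone _ (Int.le_add_one le_rfl))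
  have hx0 : (QuotientAddGroup.mk ⟨x, hx⟩ : E.fil (p + q) p ⧸
      ((E.fil (p + q) (p + 1)).addSubgroupOf (E.fil (p + q) p))) = 0 :=
    (E.β p q _ le_rfl).symm.injective (Subsingleton.elim _ _)
  exact AddSubgroup.mem_addSubgroupOf.mp ((QuotientAddGroup.eq_zero_iff _).mp hx0)

theorem fil_eq_top_of_subsingleton {n a : ℤ}
    (h : ∀ i < a, Subsingleton (E.page (E.rstab i (n - i)) i (n - i))) : E.fil n a = ⊤ := by
  obtain ⟨p₀, hp₀⟩ := E.fil_top n
  have hconst : E.fil n (min p₀ a) = E.fil n a :=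
    Int.eq_of_forall_eq_add_one _ (min_le_right _ _) fun p _ hpa =>
      have := h p hpa; E.fil_eq_fil_succ_of_subsingleton (add_sub_cancel p n)
  rw [← hconst, eq_top_iff, ← hp₀]
  exact E.fil_antitone n (min_le_left _ _)

theorem fil_succ_eq_bot_of_subsingleton {n a : ℤ}
    (h : ∀ i, a < i → Subsingleton (E.page (E.rstab i (n - i)) i (n - i))) :
    E.fil n (a + 1) = ⊥ := by
  obtain ⟨p₁, hp₁⟩ := E.fil_bot n
  have hconst : E.fil n (a + 1) = E.fil n (max p₁ (a + 1)) :=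
    Int.eq_of_forall_eq_add_one _ (le_max_right _ _) fun p hap _ =>
      have := h p (by omega); E.fil_eq_fil_succ_of_subsingleton (add_sub_cancel p n)
  rw [hconst, eq_bot_iff, ← hp₁]
  exact E.fil_antitone n (le_max_left _ _)

end BiregularSpectralSequence

namespace SpectralSequenceHom

open BiregularSpectralSequence

variable {E H : BiregularSpectralSequence.{u}} (φ : SpectralSequenceHom E H)

theorem f_succ_eq_zero {r : ℕ} {P Q : ℤ} (h : φ.f r P Q = 0) : φ.f (r + 1) P Q = 0 := by
  obtain ⟨p, rfl⟩ : ∃ p : ℤ, P = p + (r + 2) := ⟨P - (r + 2), by ring⟩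
  obtain ⟨q, rfl⟩ : ∃ q : ℤ, Q = q - (r + 2) + 1 := ⟨Q + (r + 2) - 1, by ring⟩
  ext x
  apply (H.α r p q).injective
  rw [AddMonoidHom.zero_apply, map_zero, φ.comm_α r p q x]
  obtain ⟨y, hy⟩ := QuotientAddGroup.mk_surjective (E.α r p q x)
  rw [← hy, pageHomologyMap, QuotientAddGroup.map_mk, QuotientAddGroup.eq_zero_iff,
    AddSubgroup.mem_addSubgroupOf]
  simp [h]

theorem f_eq_zero {P Q : ℤ} (h : φ.f 0 P Q = 0) : ∀ r, φ.f r P Q = 0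
  | 0 => h
  | r + 1 => φ.f_succ_eq_zero (f_eq_zero h r)

theorem fab_mem_fil_succ_of_f_eq_zero {r : ℕ} {p q n : ℤ} (hn : p + q = n)
    (hEr : E.rstab p q ≤ r) (hHr : H.rstab p q ≤ r) (hf : φ.f r p q = 0)
    {x : E.ab n} (hx : x ∈ E.fil n p) : φ.fab n x ∈ H.fil n (p + 1) := by
  subst hn
  obtain ⟨y, hy⟩ := (E.β p q r hEr).surjective (QuotientAddGroup.mk ⟨x, hx⟩)
  have h := φ.comm_β p q r hEr hHr y
  rw [hy, hf, AddMonoidHom.zero_apply, map_zero, filGradedMap, QuotientAddGroup.map_mk] at h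
  exact AddSubgroup.mem_addSubgroupOf.mp ((QuotientAddGroup.eq_zero_iff _).mp h.symm)

end SpectralSequenceHom

/-- (Wang–Zhang, Lemma 2.15.) Let `E₂^{i,j} ⇒ E^{i+j}` and `H₂^{i,j} ⇒ H^{i+j}` be two
convergent (biregular) spectral sequences with a morphism `φ` between them, and let `l`,
`a` be integers. If `E₂^{i,l-i} = 0` for `i < a`, `H₂^{i,l-i} = 0` for `i > a`, and
`φ₂^{a,l-a} = 0`, then the map `φ^l : E^l → H^l` of abutments is zero. -/
theorem SpectralSequenceHom.ab_eq_zero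
    (E H : BiregularSpectralSequence.{u}) (φ : SpectralSequenceHom E H) (l a : ℤ)
    (hE : ∀ i : ℤ, i < a → ∀ x : ↥(E.page 0 i (l - i)), x = 0)
    (hH : ∀ i : ℤ, a < i → ∀ x : ↥(H.page 0 i (l - i)), x = 0)
    (hφ : φ.f 0 a (l - a) = 0) :
    φ.fab l = 0 := by
  have hEtop : E.fil l a = ⊤ := E.fil_eq_top_of_subsingleton fun i hi =>
    have := subsingleton_of_forall_eq 0 (hE i hi); E.subsingleton_page _
  have hHbot : H.fil l (a + 1) = ⊥ := H.fil_succ_eq_bot_of_subsingleton fun i hi =>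
    have := subsingleton_of_forall_eq 0 (hH i hi); H.subsingleton_page _
  ext x
  have hx := φ.fab_mem_fil_succ_of_f_eq_zero (add_sub_cancel a l) (le_max_left _ _)
    (le_max_right _ _) (φ.f_eq_zero hφ _) (hEtop ▸ AddSubgroup.mem_top x)
  rwa [hHbot, AddSubgroup.mem_bot] at hx
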